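/- arXiv:2108.02534 — 4 statements merged into one kernel-verified Lean document; each statement's English description precedes it below -/
import Mathlib

section
/- Let m ≥ n be positive integers and let p be a degree-n real polynomial all of whose roots are real and nonnegative. Then the function u ↦ Q^{m,n}_p(u) is nondecreasing on [0, ∞). -/
open Polynomial

/-- The largest real root of a polynomial (junk value if there is none). -/
noncomputable def maxRoot (p : Polynomial ℝ) : ℝ :=
  sSup {x : ℝ | p.IsRoot x}

/-- The operator `S` on polynomials: `(Sp)(x) = p(x²)`. -/
noncomputable def Spoly (p : Polynomial ℝ) : Polynomial ℝ :=
  p.comp (Polynomial.X ^ 2)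

/-- The operator `V` (for parameters `m ≥ n`): `(Vp)(x) = x^{m−n} p(x)`. -/
noncomputable def Vpoly (m n : ℕ) (p : Polynomial ℝ) : Polynomial ℝ :=
  Polynomial.X ^ (m - n) * p

/-- `Q^{m,n}_p(u) = maxroot((Sp)·(SVp) − u·(Sp)'·(SVp)')`. -/
noncomputable def Qfun (m n : ℕ) (p : Polynomial ℝ) (u : ℝ) : ℝ :=
  maxRoot (Spoly p * Spoly (Vpoly m n p) -
    Polynomial.C u * (derivative (Spoly p)) * (derivative (Spoly (Vpoly m n p))))

/-!
Write `A = Sp`, `B = SVp` and `h_w = A·B − w·A'·B'`. If `λ` is the largest root of `p` and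
`r = √λ`, then `A(r) = 0`, and for `x ≥ r` all roots of `p` lie below `x²`, which makes
`A(x)A'(x) ≥ 0` and then `A'(x)B'(x) ≥ 0`. Hence `h_w(r) ≤ 0` for `w ≥ 0`, so `h_v` has a root
`≥ r`; and for `0 ≤ u ≤ v` and `x > maxroot h_v ≥ r` we get `h_u(x) = h_v(x) + (v − u)A'B'(x) > 0`,
so every root of `h_u` is at most `maxroot h_v`.
-/

section MaxRoot

variable {h : ℝ[X]}

lemma exists_isRoot_ge_of_eval_nonpos (hlead : 0 < h.leadingCoeff) (hdeg : 0 < h.degree)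
    {x₀ : ℝ} (hx₀ : eval x₀ h ≤ 0) : ∃ z, h.IsRoot z ∧ x₀ ≤ z := by
  have hlim := tendsto_atTop_of_leadingCoeff_nonneg h hdeg hlead.le
  obtain ⟨y, hy, hx₀y⟩ : ∃ y, 1 ≤ eval y h ∧ x₀ ≤ y :=
    ((hlim.eventually_ge_atTop 1).and (Filter.eventually_ge_atTop x₀)).exists
  obtain ⟨z, hz, hz0⟩ := intermediate_value_Icc hx₀y h.continuous.continuousOn
    (show (0 : ℝ) ∈ Set.Icc (eval x₀ h) (eval y h) from ⟨hx₀, by linarith⟩)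
  exact ⟨z, hz0, hz.1⟩

lemma le_maxRoot_of_isRoot (hh : h ≠ 0) {z : ℝ} (hz : h.IsRoot z) : z ≤ maxRoot h :=
  le_csSup (finite_setOfPred_isRoot hh).bddAbove hz

lemma le_maxRoot_of_eval_nonpos (hlead : 0 < h.leadingCoeff) (hdeg : 0 < h.degree)
    {x₀ : ℝ} (hx₀ : eval x₀ h ≤ 0) : x₀ ≤ maxRoot h := by
  obtain ⟨z, hz, hx₀z⟩ := exists_isRoot_ge_of_eval_nonpos hlead hdeg hx₀
  exact hx₀z.trans (le_maxRoot_of_isRoot (leadingCoeff_ne_zero.mp hlead.ne') hz)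

lemma eval_pos_of_maxRoot_lt (hlead : 0 < h.leadingCoeff) (hdeg : 0 < h.degree)
    {x : ℝ} (hx : maxRoot h < x) : 0 < eval x h := by
  by_contra! hneg
  exact hx.not_ge (le_maxRoot_of_eval_nonpos hlead hdeg hneg)

lemma maxRoot_le_of_forall_isRoot_le {b : ℝ} (hroot : ∃ z, h.IsRoot z)
    (hle : ∀ x, h.IsRoot x → x ≤ b) : maxRoot h ≤ b :=
  csSup_le hroot hle

end MaxRoot

lemma eval_prod_X_sub_C_nonneg_and_eval_derivative_nonneg {R : Multiset ℝ} {y : ℝ}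
    (hR : ∀ a ∈ R, a ≤ y) :
    0 ≤ eval y (R.map fun a => X - C a).prod ∧
      0 ≤ eval y (derivative (R.map fun a => X - C a).prod) := by
  induction R using Multiset.induction_on with
  | empty => simp
  | cons a R ih =>
    obtain ⟨hq, hq'⟩ := ih fun b hb => hR b (Multiset.mem_cons_of_mem hb)
    have hay : 0 ≤ y - a := sub_nonneg.2 (hR a (Multiset.mem_cons_self a R))
    simp only [Multiset.map_cons, Multiset.prod_cons, derivative_mul, derivative_sub,
      derivative_X, derivative_C, sub_zero, one_mul, eval_mul, eval_add, eval_sub, eval_X,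
      eval_C]
    exact ⟨mul_nonneg hay hq, add_nonneg hq (mul_nonneg hay hq')⟩

lemma eval_mul_eval_derivative_nonneg_of_roots_le {p : ℝ[X]}
    (hsplit : Multiset.card p.roots = p.natDegree) {y : ℝ} (hy : ∀ a ∈ p.roots, a ≤ y) :
    0 ≤ eval y p * eval y (derivative p) := by
  obtain ⟨hq, hq'⟩ := eval_prod_X_sub_C_nonneg_and_eval_derivative_nonneg hy
  rw [← C_leadingCoeff_mul_prod_multiset_X_sub_C hsplit]
  simp only [derivative_C_mul, eval_mul, eval_C]
  nlinarith [mul_nonneg (sq_nonneg p.leadingCoeff) (mul_nonneg hq hq')]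

lemma eval_derivative_mul_eval_derivative_X_pow_mul_nonneg {A : ℝ[X]} (j : ℕ) {x : ℝ}
    (hx : 0 ≤ x) (hA : 0 ≤ eval x A * eval x (derivative A)) :
    0 ≤ eval x (derivative A) * eval x (derivative (X ^ j * A)) := by
  have hxj : 0 ≤ (j : ℝ) * x ^ (j - 1) := by positivity
  simp only [derivative_mul, derivative_X_pow, eval_add, eval_mul, eval_C, eval_pow, eval_X]
  nlinarith [mul_nonneg hxj hA, mul_nonneg (pow_nonneg hx j) (sq_nonneg (eval x (derivative A)))]

section Family

variable {A B : ℝ[X]}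

lemma degree_C_mul_derivative_mul_derivative_lt (w : ℝ) (hAB : 0 < (A * B).natDegree) :
    (C w * derivative A * derivative B).degree < (A * B).degree := by
  have hA : A ≠ 0 := by rintro rfl; simp at hAB
  have hB : B ≠ 0 := by rintro rfl; simp at hAB
  have hdA := natDegree_derivative_le A
  have hdB := natDegree_derivative_le B
  rw [natDegree_mul hA hB] at hAB
  apply degree_lt_degree
  calc (C w * derivative A * derivative B).natDegree
      ≤ (C w * derivative A).natDegree + (derivative B).natDegree := natDegree_mul_le
    _ ≤ (derivative A).natDegree + (derivative B).natDegree :=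
        Nat.add_le_add_right (natDegree_C_mul_le _ _) _
    _ < (A * B).natDegree := by rw [natDegree_mul hA hB]; omega

theorem monotoneOn_maxRoot_mul_sub_C_mul_derivative_mul_derivative
    (hlead : 0 < (A * B).leadingCoeff) (hdeg : 0 < (A * B).natDegree) {r : ℝ}
    (hr : eval r (A * B) ≤ 0)
    (hderiv : ∀ x, r ≤ x → 0 ≤ eval x (derivative A) * eval x (derivative B)) :
    MonotoneOn (fun w => maxRoot (A * B - C w * derivative A * derivative B))
      (Set.Ici 0) := by
  have hlead_w (w : ℝ) : 0 < (A * B - C w * derivative A * derivative B).leadingCoeff := by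
    rwa [leadingCoeff_sub_of_degree_lt (degree_C_mul_derivative_mul_derivative_lt w hdeg)]
  have hdeg_w (w : ℝ) : 0 < (A * B - C w * derivative A * derivative B).degree := by
    rw [degree_sub_eq_left_of_degree_lt (degree_C_mul_derivative_mul_derivative_lt w hdeg)]
    exact natDegree_pos_iff_degree_pos.mp hdeg
  have heval (w x : ℝ) : eval x (A * B - C w * derivative A * derivative B) =
      eval x (A * B) - w * (eval x (derivative A) * eval x (derivative B)) := by
    simp only [eval_sub, eval_mul, eval_C]; ring
  have hr_w (w : ℝ) (hw : 0 ≤ w) : eval r (A * B - C w * derivative A * derivative B) ≤ 0 := by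
    rw [heval]
    nlinarith [mul_nonneg hw (hderiv r le_rfl)]
  intro u hu v hv huv
  have hrv : r ≤ maxRoot (A * B - C v * derivative A * derivative B) :=
    le_maxRoot_of_eval_nonpos (hlead_w v) (hdeg_w v) (hr_w v hv)
  obtain ⟨z, hz, -⟩ := exists_isRoot_ge_of_eval_nonpos (hlead_w u) (hdeg_w u) (hr_w u hu)
  refine maxRoot_le_of_forall_isRoot_le ⟨z, hz⟩ fun x hx => ?_
  by_contra! hlt
  have hpos := eval_pos_of_maxRoot_lt (hlead_w v) (hdeg_w v) hlt
  have hx0 := hx.eq_zero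
  rw [heval] at hpos hx0
  nlinarith [mul_le_mul_of_nonneg_right huv (hderiv x (hrv.trans hlt.le))]

end Family

section SV

variable (p : ℝ[X])

lemma eval_Spoly (x : ℝ) : eval x (Spoly p) = eval (x ^ 2) p := by
  simp [Spoly, eval_comp]

lemma eval_derivative_Spoly (x : ℝ) :
    eval x (derivative (Spoly p)) = 2 * x * eval (x ^ 2) (derivative p) := by
  simp only [Spoly, derivative_comp, derivative_X_pow, eval_mul, eval_comp, eval_C, eval_pow,
    eval_X]
  push_cast; ring

lemma natDegree_Spoly : (Spoly p).natDegree = 2 * p.natDegree := by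
  rw [Spoly, natDegree_comp, natDegree_X_pow, mul_comm]

lemma Spoly_Vpoly (m n : ℕ) : Spoly (Vpoly m n p) = X ^ (2 * (m - n)) * Spoly p := by
  simp [Spoly, Vpoly, mul_comp, pow_mul]

lemma eval_Spoly_mul_eval_derivative_Spoly_nonneg (hsplit : Multiset.card p.roots = p.natDegree)
    {x : ℝ} (hx : 0 ≤ x) (hroots : ∀ a ∈ p.roots, a ≤ x ^ 2) :
    0 ≤ eval x (Spoly p) * eval x (derivative (Spoly p)) := by
  rw [eval_Spoly, eval_derivative_Spoly]
  nlinarith [mul_nonneg hx (eval_mul_eval_derivative_nonneg_of_roots_le hsplit hroots)]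

end SV

theorem Qfun_monotoneOn_general
    (m n : ℕ) (hn : 0 < n) (p : Polynomial ℝ)
    (hpdeg : p.natDegree = n)
    (hproots : Multiset.card p.roots = n)
    (hppos : ∀ x ∈ p.roots, 0 ≤ x) :
    MonotoneOn (fun u => Qfun m n p u) (Set.Ici (0 : ℝ)) := by
  have hsplit : Multiset.card p.roots = p.natDegree := hproots.trans hpdeg.symm
  obtain ⟨lam, hlam, hlam_max⟩ := Multiset.exists_max_image id
    (s := p.roots) (by rintro h; simp [h] at hproots; omega)
  have hr2 : √lam ^ 2 = lam := Real.sq_sqrt (hppos lam hlam)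
  have hA : Spoly p ≠ 0 := by
    intro h; have := natDegree_Spoly p; rw [h, natDegree_zero] at this; omega
  have hXA : X ^ (2 * (m - n)) * Spoly p ≠ 0 := mul_ne_zero (pow_ne_zero _ X_ne_zero) hA
  simp only [Qfun, Spoly_Vpoly]
  refine monotoneOn_maxRoot_mul_sub_C_mul_derivative_mul_derivative (r := √lam) ?_ ?_ ?_ ?_
  · rw [leadingCoeff_mul, leadingCoeff_mul, leadingCoeff_X_pow]
    nlinarith [sq_pos_of_ne_zero (leadingCoeff_ne_zero.mpr hA)]
  · rw [natDegree_mul hA hXA, natDegree_Spoly]; omega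
  · simp [eval_Spoly, hr2, (mem_roots'.mp hlam).2.eq_zero]
  · intro x hx
    have hx0 : 0 ≤ x := (Real.sqrt_nonneg lam).trans hx
    have hlam_x : lam ≤ x ^ 2 := hr2 ▸ pow_le_pow_left₀ (Real.sqrt_nonneg lam) hx 2
    exact eval_derivative_mul_eval_derivative_X_pow_mul_nonneg _ hx0
      (eval_Spoly_mul_eval_derivative_Spoly_nonneg p hsplit hx0
        fun a ha => (hlam_max a ha).trans hlam_x)

/-- **Monotonicity of `Q^{m,n}_p`.**  For `m ≥ n ≥ 1` and a degree-`n` real polynomial `p`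
all of whose roots are real and nonnegative, the function `u ↦ Q^{m,n}_p(u)` is
nondecreasing on `[0, ∞)`. -/
theorem Qfun_monotoneOn
    (m n : ℕ) (hn : 0 < n) (hmn : n ≤ m) (p : Polynomial ℝ)
    (hpdeg : p.natDegree = n)
    (hproots : Multiset.card p.roots = n)
    (hppos : ∀ x ∈ p.roots, 0 ≤ x) :
    MonotoneOn (fun u => Qfun m n p u) (Set.Ici (0 : ℝ)) :=
  Qfun_monotoneOn_general m n hn p hpdeg hproots hppos
end

section
/- Let k ≥ 1, d ≥ 2, n ≥ 2 be integers and set m = kn. Then √( k(n−1)/(m−1) ) · ( √(d−1) + √( d(m−1)/(n−1) − 1 ) ) = √(d−1)·√( 1 − (m−n)/(n(m−1)) ) + √( dk − 1 + (m−n)/(n(m−1)) ) ≤ √(d−1) + √(dk − 1). -/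
/-! Writing `x = k(n-1)/(m-1)` and `ε = (m-n)/(n(m-1))`, one has `x = 1 - ε` and
`x · (d(m-1)/(n-1) - 1) = dk - 1 + ε`, which gives the identity after pulling `√x` inside.
For the inequality, `√(1-ε) ≤ 1 - ε/2` costs the first term at least `√(d-1) · ε/2`, while
`√(dk-1+ε)` exceeds `√(dk-1)` by at most `ε / (2√(dk-1))`; the loss wins because
`(d-1)(dk-1) ≥ 1`. -/

namespace Real

theorem sqrt_mul_sqrt_one_sub_add_sqrt_add_le {a b ε : ℝ} (ha : 0 ≤ a) (hab : 1 ≤ a * b)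
    (hε₀ : 0 ≤ ε) (hε₁ : ε ≤ 1) :
    √a * √(1 - ε) + √(b + ε) ≤ √a + √b := by
  have hb : 0 ≤ b := by nlinarith
  have hst : 1 ≤ √a * √b := by rw [← sqrt_mul ha]; exact one_le_sqrt.mpr hab
  have h_first : √a * √(1 - ε) ≤ √a * (1 - ε / 2) := by
    gcongr
    simpa [sub_eq_add_neg, neg_div] using sqrt_one_add_le (x := -ε) (by linarith)
  have h_second : √(b + ε) ≤ √b + √a * ε / 2 := by
    rw [sqrt_le_left (by positivity)]
    nlinarith [sq_sqrt ha, sq_sqrt hb, mul_le_mul_of_nonneg_right hst hε₀,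
      mul_nonneg ha (sq_nonneg ε)]
  linarith

end Real

/-- **Better-than-Ramanujan shift.**  For integers `k ≥ 1`, `d ≥ 2`, `n ≥ 2` and `m = kn`:
`√(k(n−1)/(m−1))·(√(d−1) + √(d(m−1)/(n−1) − 1))
  = √(d−1)·√(1 − (m−n)/(n(m−1))) + √(dk − 1 + (m−n)/(n(m−1)))
  ≤ √(d−1) + √(dk − 1)`. -/
theorem shifted_bound_better_than_ramanujan
    (k d n m : ℕ) (hk : 1 ≤ k) (hd : 2 ≤ d) (hn : 2 ≤ n) (hm : m = k * n) :
    (Real.sqrt ((k : ℝ) * ((n : ℝ) - 1) / ((m : ℝ) - 1)) *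
        (Real.sqrt ((d : ℝ) - 1) +
          Real.sqrt ((d : ℝ) * ((m : ℝ) - 1) / ((n : ℝ) - 1) - 1)) =
      Real.sqrt ((d : ℝ) - 1) *
          Real.sqrt (1 - ((m : ℝ) - n) / ((n : ℝ) * ((m : ℝ) - 1))) +
        Real.sqrt ((d : ℝ) * k - 1 + ((m : ℝ) - n) / ((n : ℝ) * ((m : ℝ) - 1)))) ∧
    Real.sqrt ((d : ℝ) - 1) *
          Real.sqrt (1 - ((m : ℝ) - n) / ((n : ℝ) * ((m : ℝ) - 1))) +
        Real.sqrt ((d : ℝ) * k - 1 + ((m : ℝ) - n) / ((n : ℝ) * ((m : ℝ) - 1))) ≤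
      Real.sqrt ((d : ℝ) - 1) + Real.sqrt ((d : ℝ) * k - 1) := by
  have hK : (1 : ℝ) ≤ k := by exact_mod_cast hk
  have hD : (2 : ℝ) ≤ d := by exact_mod_cast hd
  have hN : (2 : ℝ) ≤ n := by exact_mod_cast hn
  have hM : (m : ℝ) = k * n := by exact_mod_cast hm
  have hMN : (n : ℝ) ≤ m := by nlinarith
  set ε : ℝ := ((m : ℝ) - n) / (n * ((m : ℝ) - 1))
  set x : ℝ := (k : ℝ) * ((n : ℝ) - 1) / ((m : ℝ) - 1)
  have hN₁ : (n : ℝ) - 1 ≠ 0 := by linarith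
  have hM₁ : (m : ℝ) - 1 ≠ 0 := by linarith
  have hx : x = 1 - ε := by
    simp only [x, ε]
    field_simp
    rw [hM]
    ring
  have hx₀ : 0 ≤ x := div_nonneg (by nlinarith) (by linarith)
  have hxy : x * ((d : ℝ) * ((m : ℝ) - 1) / ((n : ℝ) - 1) - 1) = d * k - 1 + ε := by
    have hxd : x * ((d : ℝ) * ((m : ℝ) - 1) / ((n : ℝ) - 1)) = d * k := by
      simp only [x]
      field_simp
    linear_combination hxd - hx
  have hdk : (1 : ℝ) ≤ d * k - 1 := by nlinarith
  refine ⟨?_, Real.sqrt_mul_sqrt_one_sub_add_sqrt_add_le (by linarith)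
    (one_le_mul_of_one_le_of_one_le (by linarith) hdk)
    (div_nonneg (by linarith) (by nlinarith)) (by linarith)⟩
  rw [mul_add, ← Real.sqrt_mul hx₀ ((d : ℝ) * ((m : ℝ) - 1) / ((n : ℝ) - 1) - 1), hxy, hx]
  ring
end

section
/- Let m ≥ n ≥ 1, m ≥ s ≥ 0 and n ≥ r ≥ 0 be integers and let A be an m×n real matrix. Define Ã(y,z) = diag(y·I_s, I_{m−s}) · A · diag(z·I_r, I_{n−r}) and θ_A(x,y,z) = det( x·I_n + Ã(y,z)ᵀ Ã(y,z) ). Then θ_A(x,y,z) = Σ_{j=0}^n Σ_{p=0}^s Σ_{q=0}^r x^{n−j} y^{2p} z^{2q} A^j_{p,q}, where A^j_{p,q} = Σ [A]_{X,Y}² with the sum over X ⊆ {1,…,m}, Y ⊆ {1,…,n} with |X| = |Y| = j, |X ∩ {1,…,s}| = p, and |Y ∩ {1,…,r}| = q. -/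
/-!
Expanding `det (x • 1 + M)` multilinearly in the rows gives `∑_T x^(n - |T|) [M]_{T,T}`.
For `M = ÃᵀÃ` the Cauchy–Binet formula turns the principal minor on `T` into
`∑_X [Ã]_{X,T}²`, and since `Ã` is `A` with rows and columns rescaled,
`[Ã]_{X,T} = y^|X ∩ [s]| z^|T ∩ [r]| [A]_{X,T}`. Grouping the terms by
`(|T|, |X ∩ [s]|, |T ∩ [r]|)` produces the coefficients `A^j_{p,q}`.
-/

open Matrix

/-- The minor `[C]_{S,T}` : the determinant of the submatrix of `C` with rows indexed by
`S` and columns by `T` (in increasing order); junk value `0` if `|S| ≠ |T|`, and the empty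
minor equals `1`. -/
noncomputable def minor {m n : ℕ} (C : Matrix (Fin m) (Fin n) ℝ)
    (S : Finset (Fin m)) (T : Finset (Fin n)) : ℝ :=
  if h : S.card = T.card then
    (Matrix.of fun (i j : Fin S.card) =>
      C (S.orderEmbOfFin rfl i) (T.orderEmbOfFin h.symm j)).det
  else 0

/-- `A^j_{p,q} = Σ [A]_{X,Y}²`, the sum over row sets `X` and column sets `Y` with
`|X| = |Y| = j`, `|X ∩ {1,…,s}| = p` and `|Y ∩ {1,…,r}| = q`. -/
noncomputable def Apq {m n : ℕ} (A : Matrix (Fin m) (Fin n) ℝ) (s r j p q : ℕ) : ℝ :=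
  ∑ X : Finset (Fin m), ∑ Y : Finset (Fin n),
    if X.card = j ∧ Y.card = j ∧
        (X.filter (fun i : Fin m => (i : ℕ) < s)).card = p ∧
        (Y.filter (fun i : Fin n => (i : ℕ) < r)).card = q then
      (minor A X Y) ^ 2
    else 0

/-- `Ã(y,z) = diag(y·I_s, I_{m−s}) · A · diag(z·I_r, I_{n−r})`. -/
def Atilde {m n : ℕ} (A : Matrix (Fin m) (Fin n) ℝ) (s r : ℕ) (y z : ℝ) :
    Matrix (Fin m) (Fin n) ℝ :=
  Matrix.of fun i j =>
    (if (i : ℕ) < s then y else 1) * A i j * (if (j : ℕ) < r then z else 1)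

open Finset

theorem Finset.prod_orderEmbOfFin {α M : Type*} [LinearOrder α] [CommMonoid M] (s : Finset α)
    {k : ℕ} (h : s.card = k) (f : α → M) :
    ∏ i, f (s.orderEmbOfFin h i) = ∏ x ∈ s, f x := by
  conv_rhs => rw [← map_orderEmbOfFin_univ s h, prod_map]
  rfl

theorem Finset.sum_filter_image_eq_sum_perm {ι M : Type*} [Fintype ι] [LinearOrder ι]
    [AddCommMonoid M] {k : ℕ} (X : Finset ι) (h : X.card = k) (g : (Fin k → ι) → M) :
    ∑ f : Fin k → ι with univ.image f = X, g f =
      ∑ σ : Equiv.Perm (Fin k), g (X.orderEmbOfFin h ∘ σ) := by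
  symm
  refine sum_bij (fun σ _ => X.orderEmbOfFin h ∘ σ) ?_ ?_ ?_ fun _ _ => rfl
  · intro σ _
    simp only [mem_filter, mem_univ, true_and]
    rw [← image_image, image_univ_equiv, image_orderEmbOfFin_univ]
  · intro σ _ τ _ hστ
    exact Equiv.ext fun i => (X.orderEmbOfFin h).injective (congrFun hστ i)
  · intro f hf
    simp only [mem_filter, mem_univ, true_and] at hf
    have hmem : ∀ i, f i ∈ X := fun i => hf ▸ mem_image_of_mem f (mem_univ i)
    have hinj : Function.Injective f := by
      rw [← Set.injOn_univ, ← coe_univ, ← card_image_iff, hf, h, card_univ,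
        Fintype.card_fin]
    let σ : Fin k → Fin k := fun i => (X.orderIsoOfFin h).symm ⟨f i, hmem i⟩
    have hσ : Function.Injective σ := fun a b hab =>
      hinj (Subtype.ext_iff.mp ((X.orderIsoOfFin h).symm.injective hab))
    refine ⟨Equiv.ofBijective σ hσ.bijective_of_finite, mem_univ _, funext fun i => ?_⟩
    change X.orderEmbOfFin h ((X.orderIsoOfFin h).symm ⟨f i, hmem i⟩) = f i
    rw [← coe_orderIsoOfFin_apply, OrderIso.apply_symm_apply]

namespace Matrix

variable {R : Type*} [CommRing R]

theorem det_smul_one_add_eq_sum_det_submatrix {n : Type*} [Fintype n] [DecidableEq n]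
    (x : R) (M : Matrix n n R) :
    det (x • 1 + M) =
      ∑ s : Finset n,
        x ^ (Fintype.card n - s.card) * (M.submatrix ((↑) : s → n) (↑)).det := by
  let D := (detRowAlternating : (n → R) [⋀^n]→ₗ[R] R)
  rw [add_comm]
  change D ((fun i => M i) + fun i => (x • 1 : Matrix n n R) i) = _
  rw [D.map_add_univ]
  refine sum_congr rfl fun s _ => ?_
  let N : Matrix n n R := of (s.piecewise M.row (1 : Matrix n n R).row)
  have hrows : s.piecewise (fun i => M i) (fun i => (x • 1 : Matrix n n R) i) =
      fun i => (if i ∈ s then 1 else x) • N i := by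
    funext i j
    by_cases hi : i ∈ s <;> simp [N, hi, Matrix.row, Finset.piecewise]
  rw [hrows, D.map_smul_univ (fun i => if i ∈ s then 1 else x) N]
  change _ • det N = _
  rw [det_piecewise_one_eq_submatrix_det, prod_ite, prod_const_one, prod_const, one_mul,
    smul_eq_mul]
  congr 2
  rw [filter_not, filter_mem_eq_inter, univ_inter, card_sdiff_of_subset (subset_univ s),
    card_univ]

theorem det_mul_eq_sum_prod_mul_det_submatrix {κ ι : Type*} [Fintype κ] [DecidableEq κ]
    [Fintype ι] (P : Matrix κ ι R) (Q : Matrix ι κ R) :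
    det (P * Q) = ∑ f : κ → ι, (∏ i, Q (f i) i) * det (P.submatrix id f) := by
  simp only [det_apply', mul_apply, prod_univ_sum, mul_sum, Fintype.piFinset_univ,
    submatrix_apply, id]
  rw [sum_comm]
  refine sum_congr rfl fun f _ => sum_congr rfl fun σ _ => ?_
  rw [prod_mul_distrib]
  ring

/-- The Cauchy–Binet formula. -/
theorem det_mul_eq_sum_det_submatrix {ι : Type*} [Fintype ι] [LinearOrder ι] {k : ℕ}
    (P : Matrix (Fin k) ι R) (Q : Matrix ι (Fin k) R) :
    det (P * Q) = ∑ X : Finset ι, if h : X.card = k then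
      det (P.submatrix id (X.orderEmbOfFin h)) * det (Q.submatrix (X.orderEmbOfFin h) id)
      else 0 := by
  rw [det_mul_eq_sum_prod_mul_det_submatrix,
    ← sum_fiberwise univ fun f : Fin k → ι => univ.image f]
  refine sum_congr rfl fun X _ => ?_
  split_ifs with h
  · rw [sum_filter_image_eq_sum_perm X h, det_apply' (Q.submatrix _ id), mul_sum]
    refine sum_congr rfl fun σ _ => ?_
    rw [show P.submatrix id (X.orderEmbOfFin h ∘ σ) =
      (P.submatrix id (X.orderEmbOfFin h)).submatrix id σ from rfl, det_permute']
    simp only [Function.comp_apply, submatrix_apply, id]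
    ring
  · refine sum_eq_zero fun f hf => ?_
    have hf : ¬ Function.Injective f := fun hinj => h <| by
      rw [← (mem_filter.mp hf).2, card_image_of_injective _ hinj, card_univ, Fintype.card_fin]
    obtain ⟨a, b, hab, hne⟩ := Function.not_injective_iff.mp hf
    rw [det_zero_of_column_eq hne fun i => by simp [hab], mul_zero]

end Matrix

section Minor

variable {m n : ℕ}

theorem minor_eq_det_submatrix (C : Matrix (Fin m) (Fin n) ℝ) {S : Finset (Fin m)}
    {T : Finset (Fin n)} {k : ℕ} (hS : S.card = k) (hT : T.card = k) :
    minor C S T = det (C.submatrix (S.orderEmbOfFin hS) (T.orderEmbOfFin hT)) := by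
  subst hS
  rw [minor, dif_pos hT.symm]
  rfl

theorem minor_of_card_ne (C : Matrix (Fin m) (Fin n) ℝ) {S : Finset (Fin m)}
    {T : Finset (Fin n)} (h : S.card ≠ T.card) : minor C S T = 0 :=
  dif_neg h

theorem minor_transpose (C : Matrix (Fin m) (Fin n) ℝ) (S : Finset (Fin n))
    (T : Finset (Fin m)) : minor Cᵀ S T = minor C T S := by
  by_cases h : S.card = T.card
  · rw [minor_eq_det_submatrix Cᵀ rfl h.symm, minor_eq_det_submatrix C h.symm rfl,
      ← det_transpose]
    rfl
  · rw [minor_of_card_ne _ h, minor_of_card_ne _ (Ne.symm h)]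

theorem minor_mul {l : ℕ} (P : Matrix (Fin m) (Fin l) ℝ) (Q : Matrix (Fin l) (Fin n) ℝ)
    {S : Finset (Fin m)} {T : Finset (Fin n)} (h : S.card = T.card) :
    minor (P * Q) S T = ∑ X, minor P S X * minor Q X T := by
  rw [minor_eq_det_submatrix _ rfl h.symm, submatrix_mul _ _ _ id _ Function.bijective_id,
    det_mul_eq_sum_det_submatrix]
  refine sum_congr rfl fun X _ => ?_
  split_ifs with hX
  · rw [minor_eq_det_submatrix P rfl hX, minor_eq_det_submatrix Q hX h.symm]
    rfl
  · rw [minor_of_card_ne P (Ne.symm hX), zero_mul]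

theorem minor_diagonal_mul_mul_diagonal (u : Fin m → ℝ) (C : Matrix (Fin m) (Fin n) ℝ)
    (v : Fin n → ℝ) (S : Finset (Fin m)) (T : Finset (Fin n)) :
    minor (diagonal u * C * diagonal v) S T =
      (∏ i ∈ S, u i) * (∏ j ∈ T, v j) * minor C S T := by
  by_cases h : S.card = T.card
  · rw [minor_eq_det_submatrix _ rfl h.symm, minor_eq_det_submatrix _ rfl h.symm,
      ← prod_orderEmbOfFin S rfl, ← prod_orderEmbOfFin T h.symm]
    have hscale : (diagonal u * C * diagonal v).submatrix (S.orderEmbOfFin rfl)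
        (T.orderEmbOfFin h.symm) = of fun i j => u (S.orderEmbOfFin rfl i) *
          (of fun i j => v (T.orderEmbOfFin h.symm j) *
            C.submatrix (S.orderEmbOfFin rfl) (T.orderEmbOfFin h.symm) i j) i j := by
      ext i j
      simp only [submatrix_apply, diagonal_mul, mul_diagonal, of_apply]
      ring
    rw [hscale, det_mul_column, det_mul_row]
    ring
  · simp only [minor_of_card_ne _ h, mul_zero]

theorem det_smul_one_add_eq_sum_minor (x : ℝ) (M : Matrix (Fin n) (Fin n) ℝ) :
    det (x • 1 + M) = ∑ T : Finset (Fin n), x ^ (n - T.card) * minor M T T := by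
  rw [det_smul_one_add_eq_sum_det_submatrix, Fintype.card_fin]
  refine sum_congr rfl fun T _ => ?_
  rw [minor_eq_det_submatrix M rfl rfl,
    ← det_submatrix_equiv_self (T.orderIsoOfFin rfl).toEquiv]
  rfl

theorem minor_transpose_mul_self (C : Matrix (Fin m) (Fin n) ℝ) (T : Finset (Fin n)) :
    minor (Cᵀ * C) T T = ∑ X, minor C X T ^ 2 := by
  simp only [minor_mul _ _ rfl, minor_transpose, sq]

end Minor

theorem Atilde_eq_diagonal_mul_mul_diagonal {m n : ℕ} (A : Matrix (Fin m) (Fin n) ℝ)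
    (s r : ℕ) (y z : ℝ) :
    Atilde A s r y z = diagonal (fun i : Fin m => if (i : ℕ) < s then y else 1) * A *
      diagonal (fun j : Fin n => if (j : ℕ) < r then z else 1) := by
  ext i j
  simp only [Atilde, of_apply, diagonal_mul, mul_diagonal]

theorem minor_Atilde {m n : ℕ} (A : Matrix (Fin m) (Fin n) ℝ) (s r : ℕ) (y z : ℝ)
    (X : Finset (Fin m)) (Y : Finset (Fin n)) :
    minor (Atilde A s r y z) X Y =
      y ^ (X.filter fun i : Fin m => (i : ℕ) < s).card *
        z ^ (Y.filter fun j : Fin n => (j : ℕ) < r).card * minor A X Y := by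
  simp only [Atilde_eq_diagonal_mul_mul_diagonal, minor_diagonal_mul_mul_diagonal, prod_ite,
    prod_const, one_pow, mul_one]

theorem Fin.card_filter_val_lt_le {m : ℕ} (X : Finset (Fin m)) (s : ℕ) :
    (X.filter fun i : Fin m => (i : ℕ) < s).card ≤ s := by
  simpa using card_le_card_of_injOn (t := range s) Fin.val
    (fun i hi => mem_range.mpr (mem_filter.mp hi).2) Fin.val_injective.injOn

theorem sum_pow_mul_Apq_eq_sum_minor_sq {m n : ℕ} (A : Matrix (Fin m) (Fin n) ℝ) (s r : ℕ)
    (x y z : ℝ) :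
    ∑ j ∈ range (n + 1), ∑ p ∈ range (s + 1), ∑ q ∈ range (r + 1),
        x ^ (n - j) * y ^ (2 * p) * z ^ (2 * q) * Apq A s r j p q =
      ∑ Y : Finset (Fin n), ∑ X : Finset (Fin m), x ^ (n - Y.card) *
        (y ^ (X.filter fun i : Fin m => (i : ℕ) < s).card *
          z ^ (Y.filter fun j : Fin n => (j : ℕ) < r).card * minor A X Y) ^ 2 := by
  simp only [Apq, mul_sum, mul_ite, mul_zero]
  simp_rw [sum_comm (t := (univ : Finset (Finset (Fin m))))]
  simp_rw [sum_comm (t := (univ : Finset (Finset (Fin n))))]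
  refine sum_congr rfl fun Y _ => sum_congr rfl fun X _ => ?_
  simp only [ite_and, sum_ite_irrel, sum_const_zero, sum_ite_eq, mem_range]
  by_cases hXY : X.card = Y.card
  · have hY : Y.card ≤ n := by simpa using card_le_univ Y
    rw [if_pos (by omega), if_pos hXY.symm,
      if_pos (Nat.lt_succ_of_le (Fin.card_filter_val_lt_le X s)),
      if_pos (Nat.lt_succ_of_le (Fin.card_filter_val_lt_le Y r)), hXY]
    ring
  · simp [Ne.symm hXY, minor_of_card_ne A hXY]

theorem trivariate_charpoly_generating_function_general
    (m n s r : ℕ)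
    (A : Matrix (Fin m) (Fin n) ℝ) :
    ∀ x y z : ℝ,
      Matrix.det (x • (1 : Matrix (Fin n) (Fin n) ℝ) +
          (Atilde A s r y z)ᵀ * Atilde A s r y z) =
      ∑ j ∈ Finset.range (n + 1), ∑ p ∈ Finset.range (s + 1), ∑ q ∈ Finset.range (r + 1),
        x ^ (n - j) * y ^ (2 * p) * z ^ (2 * q) * Apq A s r j p q := by
  intro x y z
  rw [det_smul_one_add_eq_sum_minor, sum_pow_mul_Apq_eq_sum_minor_sq]
  refine sum_congr rfl fun Y _ => ?_
  simp only [minor_transpose_mul_self, minor_Atilde, mul_sum]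

/-- **The trivariate characteristic polynomial as a generating function.**
`θ_A(x,y,z) = det(x·I + Ã(y,z)ᵀÃ(y,z)) = Σ_{j,p,q} x^{n−j} y^{2p} z^{2q} A^j_{p,q}`. -/
theorem trivariate_charpoly_generating_function
    (m n s r : ℕ) (hn : 1 ≤ n) (hmn : n ≤ m) (hsm : s ≤ m) (hrn : r ≤ n)
    (A : Matrix (Fin m) (Fin n) ℝ) :
    ∀ x y z : ℝ,
      Matrix.det (x • (1 : Matrix (Fin n) (Fin n) ℝ) +
          (Atilde A s r y z)ᵀ * Atilde A s r y z) =
      ∑ j ∈ Finset.range (n + 1), ∑ p ∈ Finset.range (s + 1), ∑ q ∈ Finset.range (r + 1),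
        x ^ (n - j) * y ^ (2 * p) * z ^ (2 * q) * Apq A s r j p q :=
  trivariate_charpoly_generating_function_general m n s r A
end

section
/- For all n×n real matrices A and B, det(A + B) = Σ (−1)^{‖S‖₁ + ‖T‖₁} [A]_{S,T} · [B]_{{1,…,n}∖S, {1,…,n}∖T}, where the sum is over all pairs of subsets S, T ⊆ {1,…,n} with |S| = |T|, and ‖X‖₁ denotes the sum of the elements of the set X. -/
open Matrix

/-!
Expanding every row of `A + B` by multilinearity, `det (A + B) = ∑ S, det M_S`, where `M_S` takes
the rows in `S` from `A` and the others from `B`; the Laplace expansion of `det M_S` along the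
rows `S` is the inner sum. For the Laplace expansion, group the permutations `π` of the Leibniz
formula by the set `T` of columns that `π` sends into `S`. Those with a given `T` are exactly
`σ ⊕ τ` transported by the increasing enumerations of `S ⊔ Sᶜ` and `T ⊔ Tᶜ`, and the sign of this
transport is `(-1) ^ (‖S‖₁ + ‖T‖₁)`: the permutation listing `S` before `Sᶜ` has as inversions
the pairs `i < j` with `i ∉ S`, `j ∈ S`, so its sign is `(-1) ^ (‖S‖₁ - |S|(|S|-1)/2)`.
-/

open Finset Equiv Equiv.Perm

theorem Finset.sum_card_filter_lt {α : Type*} [LinearOrder α] (S : Finset α) :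
    ∑ j ∈ S, #{i ∈ S | i < j} = ∑ i ∈ range #S, i := by
  set e := S.orderEmbOfFin rfl
  have hmem (x : α) : x ∈ S ↔ ∃ b, e b = x := by
    rw [← Set.mem_range, range_orderEmbOfFin, mem_coe]
  have hcard (a : Fin #S) : #{i ∈ S | i < e a} = a := by
    have : {i ∈ S | i < e a} = (Iio a).map e.toEmbedding := by
      ext x
      simp only [mem_filter, hmem, mem_map, mem_Iio]
      constructor
      · rintro ⟨⟨b, rfl⟩, hb⟩
        exact ⟨b, e.lt_iff_lt.1 hb, rfl⟩
      · rintro ⟨b, hb, rfl⟩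
        exact ⟨⟨b, rfl⟩, e.lt_iff_lt.2 hb⟩
    rw [this, card_map, Fin.card_Iio]
  nth_rw 1 [← S.map_orderEmbOfFin_univ rfl]
  rw [sum_map, ← Fin.sum_univ_eq_sum_range]
  exact sum_congr rfl fun a _ => hcard a

theorem Finset.orderEmbOfFin_compl_notMem {α : Type*} [Fintype α] [DecidableEq α] [LinearOrder α]
    (s : Finset α) {k : ℕ} (h : #sᶜ = k) (i : Fin k) : sᶜ.orderEmbOfFin h i ∉ s :=
  mem_compl.1 (orderEmbOfFin_mem _ _ i)

theorem Finset.card_compl_eq_of_card_eq {α : Type*} [Fintype α] [DecidableEq α]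
    {s t : Finset α} (h : #s = #t) : #tᶜ = #sᶜ := by
  rw [card_compl, card_compl, h]

theorem Equiv.Perm.sign_mul_neg_one_pow_eq_of_lt_iff {n : ℕ} (ρ : Perm (Fin n)) (S : Finset (Fin n))
    (hρ : ∀ ⦃i j⦄, i < j → (ρ i < ρ j ↔ (j ∈ S → i ∈ S))) :
    sign ρ * (-1) ^ (∑ i ∈ range #S, i) = (-1) ^ (∑ j ∈ S, (j : ℕ)) := by
  have hcol (j : Fin n) : ∏ i ∈ Iio j, (if ρ i < ρ j then 1 else -1 : ℤˣ) =
      if j ∈ S then (-1) ^ #{i ∈ Iio j | i ∉ S} else 1 := by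
    split_ifs with hj
    · rw [prod_ite, prod_const_one, one_mul, prod_const]
      congr 2
      exact filter_congr fun i hi => by simp [hρ (mem_Iio.1 hi), hj]
    · exact prod_eq_one fun i hi => if_pos ((hρ (mem_Iio.1 hi)).2 (absurd · hj))
  have hsplit (j : Fin n) : #{i ∈ Iio j | i ∉ S} + #{i ∈ S | i < j} = j := by
    rw [← Fin.card_Iio j, ← card_filter_add_card_filter_not (s := Iio j) (· ∉ S), add_right_inj]
    congr 1
    ext i
    simp [and_comm]
  rw [sign_eq_prod_prod_Iio, Fintype.prod_congr _ _ hcol, ← prod_filter, filter_mem_eq_inter,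
    univ_inter, prod_pow_eq_pow_sum, ← sum_card_filter_lt, ← pow_add, ← sum_add_distrib]
  simp only [hsplit]

theorem sign_finSumEquivOfFinset_symm_trans {n m l : ℕ} {S T : Finset (Fin n)} (hS : #S = m)
    (hSc : #Sᶜ = l) (hT : #T = m) (hTc : #Tᶜ = l) :
    sign ((finSumEquivOfFinset hS hSc).symm.trans (finSumEquivOfFinset hT hTc)) =
      (-1) ^ (∑ i ∈ S, (i : ℕ) + ∑ j ∈ T, (j : ℕ)) := by
  have hml : m + l = n := by rw [← hS, ← hSc, card_add_card_compl, Fintype.card_fin]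
  let E : Fin m ⊕ Fin l ≃ Fin n := finSumFinEquiv.trans (finCongr hml)
  have hsign {U : Finset (Fin n)} (hU : #U = m) (hUc : #Uᶜ = l) :
      sign ((finSumEquivOfFinset hU hUc).symm.trans E) * (-1) ^ (∑ i ∈ range m, i) =
        (-1) ^ (∑ i ∈ U, (i : ℕ)) := by
    rw [show ∑ i ∈ range m, i = ∑ i ∈ range #U, i by rw [hU]]
    refine sign_mul_neg_one_pow_eq_of_lt_iff _ U fun i j hij => ?_
    obtain ⟨a, rfl⟩ := (finSumEquivOfFinset hU hUc).surjective i
    obtain ⟨b, rfl⟩ := (finSumEquivOfFinset hU hUc).surjective j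
    simp only [Equiv.trans_apply, Equiv.symm_apply_apply]
    rcases a with a | a <;> rcases b with b | b <;>
      simp [E, orderEmbOfFin_compl_notMem, ← Fin.val_fin_lt] at hij ⊢ <;> omega
  have hsplit : (finSumEquivOfFinset hS hSc).symm.trans (finSumEquivOfFinset hT hTc) =
      ((finSumEquivOfFinset hS hSc).symm.trans E).trans
        ((finSumEquivOfFinset hT hTc).symm.trans E).symm := by
    ext; simp
  have hS' := hsign hS hSc
  have hT' := hsign hT hTc
  rw [hsplit, sign_trans, sign_symm, pow_add, ← hS', ← hT', mul_mul_mul_comm,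
    Int.units_mul_self, mul_one, mul_comm]

theorem minor_eq_sum {m n : ℕ} (C : Matrix (Fin m) (Fin n) ℝ) {S : Finset (Fin m)}
    {T : Finset (Fin n)} (hST : #S = #T) :
    minor C S T = ∑ σ : Perm (Fin #S),
      ((sign σ : ℤ) : ℝ) * ∏ a, C (S.orderEmbOfFin rfl (σ a)) (T.orderEmbOfFin hST.symm a) := by
  rw [minor, dif_pos hST, det_apply']
  rfl

theorem minor_congr_rows {m n : ℕ} {C D : Matrix (Fin m) (Fin n) ℝ} {S : Finset (Fin m)}
    (T : Finset (Fin n)) (h : ∀ i ∈ S, C i = D i) : minor C S T = minor D S T := by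
  unfold minor
  split_ifs
  · simp only [h _ (orderEmbOfFin_mem S rfl _)]
  · rfl

theorem minor_piecewise {m n : ℕ} (A B : Matrix (Fin m) (Fin n) ℝ) (S : Finset (Fin m))
    (T : Finset (Fin n)) : minor (S.piecewise A B) S T = minor A S T :=
  minor_congr_rows T fun _ hi => piecewise_eq_of_mem _ _ _ hi

theorem minor_piecewise_compl {m n : ℕ} (A B : Matrix (Fin m) (Fin n) ℝ) (S : Finset (Fin m))
    (T : Finset (Fin n)) : minor (S.piecewise A B) Sᶜ T = minor B Sᶜ T :=
  minor_congr_rows T fun _ hi => piecewise_eq_of_notMem _ _ _ (mem_compl.1 hi)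

namespace LaplaceExpansion

variable {n : ℕ} {S T : Finset (Fin n)}

noncomputable def blockPerm (hST : #S = #T) (σ : Perm (Fin #S)) (τ : Perm (Fin #Sᶜ)) :
    Perm (Fin n) :=
  ((finSumEquivOfFinset hST.symm (card_compl_eq_of_card_eq hST)).symm.trans
    (Perm.sumCongr σ τ)).trans (finSumEquivOfFinset rfl rfl)

variable (hST : #S = #T)

theorem blockPerm_apply (σ : Perm (Fin #S)) (τ : Perm (Fin #Sᶜ)) (c : Fin #S ⊕ Fin #Sᶜ) :
    blockPerm hST σ τ (finSumEquivOfFinset hST.symm (card_compl_eq_of_card_eq hST) c) =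
      finSumEquivOfFinset rfl rfl (Perm.sumCongr σ τ c) := by
  simp only [blockPerm, trans_apply, symm_apply_apply]

theorem map_blockPerm_symm (σ : Perm (Fin #S)) (τ : Perm (Fin #Sᶜ)) :
    S.map (blockPerm hST σ τ).symm.toEmbedding = T := by
  ext x
  rw [mem_map_equiv, symm_symm]
  obtain ⟨c | c, rfl⟩ := (finSumEquivOfFinset hST.symm (card_compl_eq_of_card_eq hST)).surjective x
  all_goals
    rw [blockPerm_apply]
    simp [orderEmbOfFin_mem, orderEmbOfFin_compl_notMem]

theorem exists_blockPerm_eq {π : Perm (Fin n)} (hπ : S.map π.symm.toEmbedding = T) :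
    ∃ στ : Perm (Fin #S) × Perm (Fin #Sᶜ), blockPerm hST στ.1 στ.2 = π := by
  set eS := finSumEquivOfFinset (s := S) rfl rfl
  set eT := finSumEquivOfFinset hST.symm (card_compl_eq_of_card_eq hST)
  have hmaps : Set.MapsTo ((eT.trans π).trans eS.symm) (Set.range Sum.inl) (Set.range Sum.inl) := by
    rintro _ ⟨a, rfl⟩
    have haS : π (eT (Sum.inl a)) ∈ S := by
      rw [← symm_symm π, ← mem_map_equiv, hπ]
      simp [eT, orderEmbOfFin_mem]
    obtain ⟨c | c, hc⟩ := eS.surjective (π (eT (Sum.inl a)))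
    · exact ⟨c, by simp [← hc]⟩
    · exact absurd (hc ▸ haS) (orderEmbOfFin_compl_notMem S rfl c)
  obtain ⟨στ, hστ⟩ := mem_sumCongrHom_range_of_perm_mapsTo_inl hmaps
  refine ⟨στ, Equiv.ext fun x => ?_⟩
  obtain ⟨c, rfl⟩ := eT.surjective x
  rw [blockPerm_apply, ← sumCongrHom_apply, hστ]
  exact eS.apply_symm_apply _

theorem blockPerm_injective :
    Function.Injective fun στ : Perm (Fin #S) × Perm (Fin #Sᶜ) => blockPerm hST στ.1 στ.2 := by
  rintro ⟨σ, τ⟩ ⟨σ', τ'⟩ h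
  refine sumCongrHom_injective (Equiv.ext fun c => ?_)
  have := DFunLike.congr_fun h (finSumEquivOfFinset hST.symm (card_compl_eq_of_card_eq hST) c)
  simpa only [blockPerm_apply, EmbeddingLike.apply_eq_iff_eq, sumCongrHom_apply] using this

theorem sign_blockPerm (σ : Perm (Fin #S)) (τ : Perm (Fin #Sᶜ)) :
    sign (blockPerm hST σ τ) =
      (-1) ^ (∑ i ∈ S, (i : ℕ) + ∑ j ∈ T, (j : ℕ)) * (sign σ * sign τ) := by
  set eS := finSumEquivOfFinset (s := S) rfl rfl
  set eT := finSumEquivOfFinset hST.symm (card_compl_eq_of_card_eq hST)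
  have hsplit : blockPerm hST σ τ =
      (eT.symm.trans eS).trans ((eS.symm.trans (Perm.sumCongr σ τ)).trans eS) := by
    ext; simp [blockPerm, eS, eT]
  rw [hsplit, sign_trans, sign_symm_trans_trans, sign_sumCongr,
    sign_finSumEquivOfFinset_symm_trans, add_comm, mul_comm]

theorem prod_blockPerm (M : Matrix (Fin n) (Fin n) ℝ) (σ : Perm (Fin #S)) (τ : Perm (Fin #Sᶜ)) :
    ∏ x, M (blockPerm hST σ τ x) x =
      (∏ a, M (S.orderEmbOfFin rfl (σ a)) (T.orderEmbOfFin hST.symm a)) *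
        ∏ b, M (Sᶜ.orderEmbOfFin rfl (τ b))
          (Tᶜ.orderEmbOfFin (card_compl_eq_of_card_eq hST) b) := by
  rw [← (finSumEquivOfFinset hST.symm (card_compl_eq_of_card_eq hST)).prod_comp,
    Fintype.prod_sum_type]
  simp only [blockPerm_apply]
  rfl

theorem sum_fiber_eq_mul_minor_mul_minor (hST : #S = #T) (M : Matrix (Fin n) (Fin n) ℝ) :
    ∑ π ∈ univ.filter (fun π : Perm (Fin n) => S.map π.symm.toEmbedding = T),
        ((sign π : ℤ) : ℝ) * ∏ x, M (π x) x =
      (-1) ^ (∑ i ∈ S, (i : ℕ) + ∑ j ∈ T, (j : ℕ)) * minor M S T * minor M Sᶜ Tᶜ := by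
  rw [minor_eq_sum M hST, minor_eq_sum M (card_compl_eq_of_card_eq hST).symm, mul_assoc,
    sum_mul_sum, ← Fintype.sum_prod_type', mul_sum]
  symm
  refine sum_nbij (fun στ => blockPerm hST στ.1 στ.2) (fun στ _ => ?_)
    (blockPerm_injective hST).injOn (fun π hπ => ?_) (fun στ _ => ?_)
  · simp [map_blockPerm_symm]
  · obtain ⟨στ, hστ⟩ := exists_blockPerm_eq hST (mem_filter.1 hπ).2
    exact ⟨στ, mem_coe.2 (mem_univ _), hστ⟩
  · rw [prod_blockPerm, sign_blockPerm]
    push_cast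
    ring

end LaplaceExpansion

theorem Matrix.det_eq_sum_minor_mul_minor_compl {n : ℕ} (M : Matrix (Fin n) (Fin n) ℝ)
    (S : Finset (Fin n)) :
    M.det = ∑ T : Finset (Fin n), if #S = #T then
      (-1) ^ (∑ i ∈ S, (i : ℕ) + ∑ j ∈ T, (j : ℕ)) * minor M S T * minor M Sᶜ Tᶜ else 0 := by
  rw [det_apply', ← sum_fiberwise univ fun π : Perm (Fin n) => S.map π.symm.toEmbedding]
  refine sum_congr rfl fun T _ => ?_
  split_ifs with hST
  · exact LaplaceExpansion.sum_fiber_eq_mul_minor_mul_minor hST M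
  · refine sum_eq_zero fun π hπ => absurd ?_ hST
    rw [← (mem_filter.1 hπ).2, card_map]

/-- Indices are numbered from `0`; since `|S| = |T|`, this does not change the parity of
`‖S‖₁ + ‖T‖₁`. -/
theorem det_add_expansion (n : ℕ) (A B : Matrix (Fin n) (Fin n) ℝ) :
    Matrix.det (A + B) =
      ∑ S : Finset (Fin n), ∑ T : Finset (Fin n),
        if S.card = T.card then
          (-1 : ℝ) ^ ((∑ i ∈ S, (i : ℕ)) + ∑ j ∈ T, (j : ℕ)) *
            minor A S T * minor B Sᶜ Tᶜ
        else 0 := by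
  have hsplit : (A + B).det = ∑ S : Finset (Fin n), det (S.piecewise A B) :=
    detRowAlternating.map_add_univ A B
  rw [hsplit]
  refine sum_congr rfl fun S _ => ?_
  refine (det_eq_sum_minor_mul_minor_compl _ S).trans ?_
  simp only [minor_piecewise, minor_piecewise_compl]
end
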